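/- Let Y = [0,1]×[0,1] and define g: Y → Y by: g(x,1) = (1/2, 1) for all x; and for 0 ≤ p < 1, g(x,p) = (2x/(1-p), p/(1+p)) if x < (1-p)/2, g(x,p) = (1/2, 1) if (1-p)/2 ≤ x ≤ (1+p)/2, and g(x,p) = (2(x-(1+p)/2)/(1-p), p/(1+p)) if x > (1+p)/2. Then for Lebesgue-a.e. (x,p) ∈ Y there exists n with g^n(x,p) = (1/2, 1); i.e., the set K₂ = {(x,p) : ∀n, g^n(x,p) ≠ (1/2,1)} has Lebesgue measure zero. -/

import Mathlib

open Filter MeasureTheory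

/-- The sieving map `g` on the unit square `Y = [0,1] × [0,1]`. -/
noncomputable def g : ℝ × ℝ → ℝ × ℝ := fun z =>
  let x := z.1
  let p := z.2
  if p = 1 then (1 / 2, 1)
  else if x < (1 - p) / 2 then (2 * x / (1 - p), p / (1 + p))
  else if x ≤ (1 + p) / 2 then (1 / 2, 1)
  else (2 * (x - (1 + p) / 2) / (1 - p), p / (1 + p))

/-!
On the slice at height `p ∈ [0, 1)`, a point whose orbit never reaches `(1/2, 1)` avoids the
middle interval of length `p`, so the slice of `K₂` at height `p` is covered by two affine copies,
scaled by `(1 - p) / 2`, of its slice at height `p / (1 + p)`. The slice measures therefore satisfy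
`m p ≤ (1 - p) * m (p / (1 + p))`. As `p ↦ p / (1 + p)` is `1 / p ↦ 1 / p + 1`, induction gives
`m p ≤ 1 / (1 + n * p)` for all `n`, so every slice with `p > 0` is null, and Fubini concludes.
-/

theorem g_of_snd_eq_one (x : ℝ) : g (x, 1) = (1 / 2, 1) := by simp [g]

theorem g_eq_or_eq_of_ne {x p : ℝ} (hp : p ≠ 1) (h : g (x, p) ≠ (1 / 2, 1)) :
    g (x, p) = (2 / (1 - p) * x, p / (1 + p)) ∨
      g (x, p) = (2 / (1 - p) * x - (1 + p) / (1 - p), p / (1 + p)) := by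
  have h1p : 1 - p ≠ 0 := sub_ne_zero.2 hp.symm
  simp only [g, hp, if_false] at h ⊢
  split_ifs at h ⊢
  · left; ring_nf
  · exact absurd rfl h
  · right; congr 1; field_simp

theorem measurable_g : Measurable g := by
  refine Measurable.ite (measurable_snd (measurableSet_singleton 1)) measurable_const ?_
  refine Measurable.ite (measurableSet_lt measurable_fst (by fun_prop)) (by fun_prop) ?_
  exact Measurable.ite (measurableSet_le measurable_fst (by fun_prop)) measurable_const (by fun_prop)

theorem mapsTo_g : Set.MapsTo g (Set.Icc 0 1 ×ˢ Set.Icc 0 1) (Set.Icc 0 1 ×ˢ Set.Icc 0 1) := by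
  rintro ⟨x, p⟩ ⟨⟨hx0, hx1⟩, hp0, hp1⟩
  dsimp only at hx0 hx1 hp0 hp1
  have hs : ((1 : ℝ) / 2, (1 : ℝ)) ∈ Set.Icc (0 : ℝ) 1 ×ˢ Set.Icc (0 : ℝ) 1 := by norm_num
  have hp' : p / (1 + p) ∈ Set.Icc (0 : ℝ) 1 :=
    ⟨by positivity, (div_le_one (by linarith)).2 (by linarith)⟩
  simp only [g]
  split_ifs with h1 h2 h3
  · exact hs
  · have h1p : 0 < 1 - p := sub_pos.2 (lt_of_le_of_ne hp1 h1)
    exact ⟨⟨by positivity, (div_le_one h1p).2 (by linarith)⟩, hp'⟩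
  · exact hs
  · have h1p : 0 < 1 - p := sub_pos.2 (lt_of_le_of_ne hp1 h1)
    exact ⟨⟨div_nonneg (by linarith) h1p.le, (div_le_one h1p).2 (by linarith)⟩, hp'⟩

theorem Real.volume_preimage_mul_sub {a : ℝ} (ha : a ≠ 0) (b : ℝ) (s : Set ℝ) :
    volume ((fun x => a * x - b) ⁻¹' s) = ENNReal.ofReal |a⁻¹| * volume s := by
  rw [show (fun x => a * x - b) = (· - b) ∘ (a * ·) from rfl, Set.preimage_comp,
    Real.volume_preimage_mul_left ha]
  simp [sub_eq_add_neg, measure_preimage_add_right]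

theorem one_sub_mul_inv_le_inv {p t : ℝ} (hp : 0 ≤ p) (ht : 0 ≤ t) :
    (1 - p) * (1 + t * (p / (1 + p)))⁻¹ ≤ (1 + (t + 1) * p)⁻¹ := by
  have hden : 1 + t * (p / (1 + p)) = (1 + (t + 1) * p) / (1 + p) := by
    field_simp; ring
  rw [hden, inv_div, ← mul_div_assoc, inv_eq_one_div, div_le_div_iff_of_pos_right (by positivity)]
  nlinarith [sq_nonneg p]

/-- The set `K₂`. -/
def neverSieved : Set (ℝ × ℝ) :=
  {z | z ∈ Set.Icc (0 : ℝ) 1 ×ˢ Set.Icc (0 : ℝ) 1 ∧ ∀ n : ℕ, g^[n] z ≠ (1 / 2, 1)}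

theorem measurableSet_neverSieved : MeasurableSet neverSieved := by
  refine (measurableSet_Icc.prod measurableSet_Icc).inter ?_
  change MeasurableSet {z : ℝ × ℝ | ∀ n : ℕ, g^[n] z ≠ (1 / 2, 1)}
  rw [Set.ofPred_forall]
  exact MeasurableSet.iInter fun n => (measurable_g.iterate n (measurableSet_singleton _)).compl

theorem g_mem_neverSieved {z : ℝ × ℝ} (hz : z ∈ neverSieved) : g z ∈ neverSieved :=
  ⟨mapsTo_g hz.1, fun n => by simpa only [Function.iterate_succ_apply] using hz.2 (n + 1)⟩

theorem slice_neverSieved_eq_empty {p : ℝ} (hp : p ∉ Set.Ico 0 1) :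
    (·, p) ⁻¹' neverSieved = ∅ := by
  refine Set.eq_empty_of_forall_notMem fun x hx => hp ⟨hx.1.2.1, ?_⟩
  refine lt_of_le_of_ne hx.1.2.2 fun h => hx.2 1 ?_
  rw [h, Function.iterate_one, g_of_snd_eq_one]

theorem slice_neverSieved_subset {p : ℝ} (hp : p ≠ 1) :
    (·, p) ⁻¹' neverSieved ⊆
      (2 / (1 - p) * ·) ⁻¹' ((·, p / (1 + p)) ⁻¹' neverSieved) ∪
        (fun x => 2 / (1 - p) * x - (1 + p) / (1 - p)) ⁻¹' ((·, p / (1 + p)) ⁻¹' neverSieved) := by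
  intro x hx
  have hgx := g_mem_neverSieved hx
  rcases g_eq_or_eq_of_ne hp (hx.2 1) with h | h <;> rw [h] at hgx
  exacts [Or.inl hgx, Or.inr hgx]

theorem volume_slice_neverSieved_le_mul {p : ℝ} (hp : p < 1) :
    volume ((·, p) ⁻¹' neverSieved) ≤
      ENNReal.ofReal (1 - p) * volume ((·, p / (1 + p)) ⁻¹' neverSieved) := by
  have ha : 2 / (1 - p) ≠ 0 := (div_pos two_pos (sub_pos.2 hp)).ne'
  have hinv : ENNReal.ofReal |(2 / (1 - p))⁻¹| = ENNReal.ofReal ((1 - p) / 2) := by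
    rw [inv_div, abs_of_pos (by linarith)]
  calc volume ((·, p) ⁻¹' neverSieved)
      ≤ volume ((2 / (1 - p) * ·) ⁻¹' ((·, p / (1 + p)) ⁻¹' neverSieved)) +
          volume ((fun x => 2 / (1 - p) * x - (1 + p) / (1 - p)) ⁻¹'
            ((·, p / (1 + p)) ⁻¹' neverSieved)) :=
        (measure_mono (slice_neverSieved_subset hp.ne)).trans (measure_union_le _ _)
    _ = ENNReal.ofReal ((1 - p) / 2 + (1 - p) / 2) *
          volume ((·, p / (1 + p)) ⁻¹' neverSieved) := by
        rw [Real.volume_preimage_mul_left ha, Real.volume_preimage_mul_sub ha, hinv, ← add_mul,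
          ENNReal.ofReal_add (by linarith) (by linarith)]
    _ = ENNReal.ofReal (1 - p) * volume ((·, p / (1 + p)) ⁻¹' neverSieved) := by
        rw [add_halves]

theorem volume_slice_neverSieved_le (n : ℕ) {p : ℝ} (hp : 0 ≤ p) :
    volume ((·, p) ⁻¹' neverSieved) ≤ ENNReal.ofReal (1 + n * p)⁻¹ := by
  induction n generalizing p with
  | zero =>
    calc volume ((·, p) ⁻¹' neverSieved) ≤ volume (Set.Icc (0 : ℝ) 1) :=
          measure_mono fun x hx => hx.1.1
      _ = ENNReal.ofReal (1 + (0 : ℕ) * p)⁻¹ := by simp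
  | succ n ih =>
    rcases le_or_gt 1 p with hp1 | hp1
    · rw [slice_neverSieved_eq_empty fun h => hp1.not_gt h.2, measure_empty]
      exact zero_le
    calc volume ((·, p) ⁻¹' neverSieved)
        ≤ ENNReal.ofReal (1 - p) * volume ((·, p / (1 + p)) ⁻¹' neverSieved) :=
          volume_slice_neverSieved_le_mul hp1
      _ ≤ ENNReal.ofReal (1 - p) * ENNReal.ofReal (1 + n * (p / (1 + p)))⁻¹ := by
          gcongr; exact ih (by positivity)
      _ ≤ ENNReal.ofReal (1 + (n + 1 : ℕ) * p)⁻¹ := by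
          rw [← ENNReal.ofReal_mul (by linarith)]
          push_cast
          exact ENNReal.ofReal_le_ofReal (one_sub_mul_inv_le_inv hp n.cast_nonneg)

theorem volume_slice_neverSieved_eq_zero {p : ℝ} (hp : 0 < p) :
    volume ((·, p) ⁻¹' neverSieved) = 0 := by
  have hlim : Tendsto (fun n : ℕ => ENNReal.ofReal (1 + n * p)⁻¹) atTop (nhds 0) := by
    simpa using ENNReal.tendsto_ofReal
      (tendsto_atTop_add_const_left _ 1
        (tendsto_natCast_atTop_atTop.atTop_mul_const hp)).inv_tendsto_atTop
  exact le_antisymm (ge_of_tendsto' hlim fun n => volume_slice_neverSieved_le n hp.le) zero_le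

/-- The set `K₂` of points of the unit square never mapped to `s₂ = (1/2, 1)` by the
iterates of the sieving map `g` has Lebesgue measure zero. -/
theorem sieving_nontypical_measure_zero :
    volume {z : ℝ × ℝ | z ∈ Set.Icc (0 : ℝ) 1 ×ˢ Set.Icc (0 : ℝ) 1 ∧
      ∀ n : ℕ, g^[n] z ≠ (1 / 2, 1)} = 0 := by
  change volume neverSieved = 0
  rw [Measure.volume_eq_prod, Measure.prod_apply_symm measurableSet_neverSieved]
  refine (lintegral_congr_ae ?_).trans lintegral_zero
  filter_upwards [Measure.ae_ne volume 0] with p hp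
  rcases hp.lt_or_gt with hneg | hpos
  · rw [slice_neverSieved_eq_empty fun h => hneg.not_ge h.1, measure_empty]
  · exact volume_slice_neverSieved_eq_zero hpos
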